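/- arXiv:2501.09779 — 4 statements merged into one kernel-verified Lean document; each statement's English description precedes it below -/
import Mathlib

section
/- Let G be a finite simple graph on n ≥ 3 vertices that is not complete. Form G' by adding a disjoint set of n new vertices forming a clique K_n, together with a perfect matching joining each original vertex to a distinct new vertex. Then the only n-vertex clique in G' is the newly added clique; i.e., any set of n vertices of G' inducing a complete subgraph equals the set of new vertices. -/
open SimpleGraph

/-- Matching-plus-clique extension: old vertices `Sum.inl v`, new clique vertices `Sum.inr v`,
with `Sum.inr v` the matching partner of `Sum.inl v`. -/
def ext {V : Type*} (G : SimpleGraph V) : SimpleGraph (V ⊕ V) where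
  Adj x y :=
    match x, y with
    | Sum.inl a, Sum.inl b => G.Adj a b
    | Sum.inr a, Sum.inr b => a ≠ b
    | Sum.inl a, Sum.inr b => a = b
    | Sum.inr a, Sum.inl b => a = b
  symm := by
    constructor
    rintro (a | a) (b | b) h <;> simp_all
    · exact h.symm
    · exact fun e => h e.symm
  loopless := by
    constructor
    rintro (a | a) h <;> simp_all

instance {V : Type*} (G : SimpleGraph V) [DecidableEq V] [DecidableRel G.Adj] :
    DecidableRel (ext G).Adj
  | Sum.inl a, Sum.inl b => inferInstanceAs (Decidable (G.Adj a b))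
  | Sum.inl a, Sum.inr b => inferInstanceAs (Decidable (a = b))
  | Sum.inr a, Sum.inl b => inferInstanceAs (Decidable (a = b))
  | Sum.inr a, Sum.inr b => inferInstanceAs (Decidable (a ≠ b))

instance {V : Type*} (G : SimpleGraph V) : Group (G ≃g G) where
  mul a b := b.trans a
  one := SimpleGraph.Iso.refl
  inv := SimpleGraph.Iso.symm
  mul_assoc a b c := rfl
  one_mul a := rfl
  mul_one a := rfl
  inv_mul_cancel a := by
    have : a.trans a.symm = SimpleGraph.Iso.refl := by
      ext v
      exact a.toEquiv.symm_apply_apply v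
    exact this

/-!
A clique of `ext G` meeting both sides contains an edge `inl a — inr a` of the matching; every
further vertex would have to be matched to `a` as well, so the clique is `{inl a, inr a}`.
Hence an `n`-clique with `n ≥ 3` lies on one side. On the old side it would be all of `V`,
making `G` complete; so it is the new clique.
-/

theorem Finset.eq_image_univ_of_subset_range {α β : Type*} [Fintype α] [DecidableEq β]
    {f : α → β} (hf : Function.Injective f) {S : Finset β} (hS : (S : Set β) ⊆ Set.range f)
    (hcard : S.card = Fintype.card α) : S = Finset.univ.image f := by
  refine Finset.eq_of_subset_of_card_le (fun x hx => ?_) ?_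
  · obtain ⟨a, rfl⟩ := hS hx
    exact Finset.mem_image_of_mem f (Finset.mem_univ a)
  · rw [Finset.card_image_of_injective _ hf, Finset.card_univ, hcard]

namespace SimpleGraph

variable {V : Type*} {G : SimpleGraph V}

theorem IsClique.subset_of_inl_mem_of_inr_mem {s : Set (V ⊕ V)} (hs : (ext G).IsClique s)
    {a b : V} (ha : Sum.inl a ∈ s) (hb : Sum.inr b ∈ s) : s ⊆ {Sum.inl a, Sum.inr a} := by
  have hab : a = b := hs ha hb (by simp)
  subst hab
  rintro (c | c) hc
  · have hca : c = a := hs hc hb (by simp)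
    simp [hca]
  · have hac : a = c := hs ha hc (by simp)
    simp [hac]

theorem IsClique.subset_range_or_subset_pair {s : Set (V ⊕ V)} (hs : (ext G).IsClique s) :
    s ⊆ Set.range Sum.inl ∨ s ⊆ Set.range Sum.inr ∨ ∃ a, s ⊆ {Sum.inl a, Sum.inr a} := by
  by_cases hl : ∃ a, Sum.inl a ∈ s
  · obtain ⟨a, ha⟩ := hl
    by_cases hr : ∃ b, Sum.inr b ∈ s
    · obtain ⟨b, hb⟩ := hr
      exact Or.inr (Or.inr ⟨a, hs.subset_of_inl_mem_of_inr_mem ha hb⟩)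
    · simp only [not_exists] at hr
      refine Or.inl ?_
      rintro (c | c) hc
      · exact ⟨c, rfl⟩
      · exact absurd hc (hr c)
  · simp only [not_exists] at hl
    refine Or.inr (Or.inl ?_)
    rintro (c | c) hc
    · exact absurd hc (hl c)
    · exact ⟨c, rfl⟩

theorem eq_top_of_isClique_range_inl (h : (ext G).IsClique (Set.range Sum.inl)) : G = ⊤ := by
  ext a b
  exact ⟨Adj.ne, fun hab => h ⟨a, rfl⟩ ⟨b, rfl⟩ (Sum.inl_injective.ne hab)⟩

end SimpleGraph

theorem stmt0 {V : Type*} [Fintype V] [DecidableEq V] (G : SimpleGraph V)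
    (hn : 3 ≤ Fintype.card V) (hnc : G ≠ ⊤)
    (S : Finset (V ⊕ V)) (hcard : S.card = Fintype.card V)
    (hclique : (ext G).IsClique (S : Set (V ⊕ V))) :
    S = Finset.univ.image Sum.inr := by
  rcases hclique.subset_range_or_subset_pair with hl | hr | ⟨a, hpair⟩
  · have hS := Finset.eq_image_univ_of_subset_range Sum.inl_injective hl hcard
    refine absurd (eq_top_of_isClique_range_inl ?_) hnc
    simpa [hS] using hclique
  · exact Finset.eq_image_univ_of_subset_range Sum.inr_injective hr hcard
  · have hle : S.card ≤ 2 := by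
      calc S.card ≤ ({Sum.inl a, Sum.inr a} : Finset (V ⊕ V)).card :=
            Finset.card_le_card (Finset.coe_subset.mp (by simpa using hpair))
        _ ≤ 2 := Finset.card_le_two
    omega
end

section
/- Let G be a finite simple graph on n ≥ 3 vertices that is not complete, and let G' be obtained by adding a disjoint clique on n new vertices and a perfect matching between old and new vertices. Then every automorphism φ of G' maps the set of new vertices to itself (and hence the set of old vertices to itself). -/
open SimpleGraph

/-!
In `ext G` a triangle never mixes old and new vertices: an old vertex has exactly one new
neighbour, and a new vertex exactly one old neighbour. Since `n ≥ 3`, any two vertices of the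
new `n`-clique lie on a common triangle, so `φ` sends the whole clique to one side. If it went to
the old side, by finiteness it would fill it, making `G` complete. Hence `φ` and `φ⁻¹` preserve
the new side, and so also the old side.
-/

section

variable {V : Type*} {G : SimpleGraph V}

lemma ext_isLeft_eq_of_triangle {x y z : V ⊕ V} (hxy : (ext G).Adj x y) (hyz : (ext G).Adj y z)
    (hxz : (ext G).Adj x z) : x.isLeft = y.isLeft := by
  rcases x with a | a <;> rcases y with b | b <;> rcases z with c | c <;>
    simp_all [ext]

lemma ext_isLeft_eq_of_pairwise_adj {ι : Type*} [Fintype ι] (hι : 3 ≤ Fintype.card ι)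
    {f : ι → V ⊕ V} (hf : ∀ i j, i ≠ j → (ext G).Adj (f i) (f j)) (i j : ι) :
    (f i).isLeft = (f j).isLeft := by
  obtain rfl | hij := eq_or_ne i j
  · rfl
  obtain ⟨k, hki, hkj⟩ := ENat.exists_ne_ne_of_three_le (by simpa using hι) i j
  exact ext_isLeft_eq_of_triangle (hf i j hij) (hf j k hkj.symm) (hf i k hki.symm)

lemma eq_top_of_injective_of_adj [Finite V] {f : V → V} (hf : Function.Injective f)
    (hadj : ∀ a b, a ≠ b → G.Adj (f a) (f b)) : G = ⊤ := by
  have hsurj := Finite.surjective_of_injective hf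
  ext u v
  refine ⟨G.ne_of_adj, fun huv => ?_⟩
  obtain ⟨a, rfl⟩ := hsurj u
  obtain ⟨b, rfl⟩ := hsurj v
  exact hadj a b (ne_of_apply_ne f huv)

lemma ext_iso_apply_inr [Fintype V] (hn : 3 ≤ Fintype.card V) (hnc : G ≠ ⊤)
    (φ : ext G ≃g ext G) (v : V) : ∃ w, φ (Sum.inr v) = Sum.inr w := by
  have hadj (a b : V) (hab : a ≠ b) : (ext G).Adj (φ (Sum.inr a)) (φ (Sum.inr b)) :=
    φ.map_adj_iff.mpr hab
  have hside := ext_isLeft_eq_of_pairwise_adj hn hadj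
  rw [← Sum.isRight_iff, ← Sum.not_isLeft]
  intro hleft
  have hall (a : V) : ∃ u, φ (Sum.inr a) = Sum.inl u := by
    rw [← Sum.isLeft_iff, hside a v]
    exact hleft
  choose f hf using hall
  refine hnc (eq_top_of_injective_of_adj (f := f) (fun a b hab => ?_) fun a b hab => ?_)
  · exact Sum.inr_injective (φ.injective (by rw [hf, hf, hab]))
  · have := hadj a b hab
    rwa [hf, hf] at this

end

theorem stmt1 {V : Type*} [Fintype V] (G : SimpleGraph V)
    (hn : 3 ≤ Fintype.card V) (hnc : G ≠ ⊤) (φ : ext G ≃g ext G) :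
    (∀ v : V, ∃ w : V, φ (Sum.inr v) = Sum.inr w) ∧
    (∀ v : V, ∃ w : V, φ (Sum.inl v) = Sum.inl w) := by
  refine ⟨ext_iso_apply_inr hn hnc φ, fun v => ?_⟩
  rcases hv : φ (Sum.inl v) with w | w
  · exact ⟨w, rfl⟩
  · obtain ⟨u, hu⟩ := ext_iso_apply_inr hn hnc φ.symm w
    rw [← hv, φ.symm_apply_apply] at hu
    exact absurd hu Sum.inl_ne_inr
end

section
/- Let G be a non-complete finite simple graph, and let G' be the graph obtained from G by adding a disjoint clique with the same number of vertices and a perfect matching between the two parts. Then the automorphism group of G' is isomorphic to the automorphism group of G. -/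
open SimpleGraph

/-! Every automorphism `e` of `G` extends to `ext G` by acting on both copies of `V`, and the
point is that every automorphism `φ` of `ext G` preserves the two copies. A clique vertex has
degree `n`, while `Sum.inl x` has degree `deg x + 1`; so if `φ` sent a clique vertex to `Sum.inl x`,
then `x` would be universal in `G`, and all other clique vertices would go to universal vertices
of `G` or to the single vertex `Sum.inr x`. Since `G` is not complete it has two non-universal
vertices, leaving fewer than `n` targets for the `n` clique vertices. -/

open Finset

section

variable {V : Type*} {G : SimpleGraph V}

@[simp] lemma ext_adj_inl_inl {a b : V} : (ext G).Adj (Sum.inl a) (Sum.inl b) ↔ G.Adj a b :=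
  Iff.rfl

@[simp] lemma ext_adj_inr_inr {a b : V} : (ext G).Adj (Sum.inr a) (Sum.inr b) ↔ a ≠ b := Iff.rfl

@[simp] lemma ext_adj_inl_inr {a b : V} : (ext G).Adj (Sum.inl a) (Sum.inr b) ↔ a = b := Iff.rfl

@[simp] lemma ext_adj_inr_inl {a b : V} : (ext G).Adj (Sum.inr a) (Sum.inl b) ↔ a = b := Iff.rfl

section Degree

variable [Fintype V] [DecidableEq V] [DecidableRel G.Adj]

lemma ext_neighborFinset_inl (v : V) :
    (ext G).neighborFinset (Sum.inl v) = (G.neighborFinset v).disjSum {v} := by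
  ext (w | w) <;> simp [eq_comm]

lemma ext_neighborFinset_inr (v : V) :
    (ext G).neighborFinset (Sum.inr v) = ({v} : Finset V).disjSum (univ.erase v) := by
  ext (w | w) <;> simp [eq_comm]

lemma ext_degree_inl (v : V) : (ext G).degree (Sum.inl v) = G.degree v + 1 := by
  rw [← card_neighborFinset_eq_degree, ext_neighborFinset_inl, card_disjSum,
    card_neighborFinset_eq_degree, card_singleton]

lemma ext_degree_inr (v : V) : (ext G).degree (Sum.inr v) = Fintype.card V := by
  have := Fintype.card_pos_iff.2 ⟨v⟩
  rw [← card_neighborFinset_eq_degree, ext_neighborFinset_inr, card_disjSum, card_singleton,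
    card_erase_of_mem (mem_univ v), card_univ]
  omega

end Degree

lemma isUniversal_of_map_inr_eq_inl [Fintype V] (φ : ext G ≃g ext G) {v x : V}
    (h : φ (Sum.inr v) = Sum.inl x) : G.IsUniversal x := by
  classical
  rw [← degree_eq_card_sub_one, ← ext_degree_inr (G := G) v, ← φ.degree_eq, h, ext_degree_inl]
  simp

lemma isRight_map_inr [Finite V] (hG : G ≠ ⊤) (φ : ext G ≃g ext G) (v : V) :
    (φ (Sum.inr v)).isRight := by
  classical
  have := Fintype.ofFinite V
  by_contra hv
  obtain ⟨x, hx⟩ := Sum.isLeft_iff.1 (Sum.not_isRight.1 hv)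
  obtain ⟨a, b, hab, hnadj⟩ := ne_top_iff_exists_not_adj.1 hG
  have hmaps : ∀ w, φ (Sum.inr w) ∈ (univ \ {a, b}).disjSum {x} := by
    intro w
    rcases hw : φ (Sum.inr w) with y | y
    · have hy := isUniversal_of_map_inr_eq_inl φ hw
      simp only [inl_mem_disjSum, mem_sdiff, mem_univ, mem_insert, mem_singleton, true_and]
      rintro (rfl | rfl)
      exacts [hnadj (hy hab), hnadj (hy hab.symm).symm]
    · have hwv : w ≠ v := by
        rintro rfl
        simp [hx] at hw
      have hadj := φ.map_rel_iff.2 ((ext_adj_inr_inr (G := G)).2 hwv.symm)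
      rw [hx, hw, ext_adj_inl_inr] at hadj
      simp [hadj]
  have hcard := card_le_card_of_injOn (s := univ) _ (fun w _ => hmaps w)
    (φ.injective.comp Sum.inr_injective).injOn
  rw [card_univ, card_disjSum, card_univ_sdiff, card_pair hab, card_singleton] at hcard
  have : 2 ≤ Fintype.card V := (card_pair hab).symm.trans_le (card_le_univ _)
  omega

lemma isLeft_map_inl [Finite V] (hG : G ≠ ⊤) (φ : ext G ≃g ext G) (v : V) :
    (φ (Sum.inl v)).isLeft := by
  rcases hu : φ (Sum.inl v) with y | u
  · rfl
  · have := isRight_map_inr hG φ.symm u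
    rw [← hu, φ.symm_apply_apply] at this
    simp at this

def extIso (e : G ≃g G) : ext G ≃g ext G where
  toEquiv := Equiv.sumCongr e.toEquiv e.toEquiv
  map_rel_iff' := by
    rintro (a | a) (b | b)
    · exact e.map_rel_iff
    · exact e.toEquiv.apply_eq_iff_eq
    · exact e.toEquiv.apply_eq_iff_eq
    · exact e.toEquiv.injective.ne_iff

variable (G) in
def extIsoHom : (G ≃g G) →* (ext G ≃g ext G) where
  toFun := extIso
  map_one' := by ext (v | v) <;> rfl
  map_mul' _ _ := by ext (v | v) <;> rfl

lemma extIsoHom_injective : Function.Injective (extIsoHom G) := fun _ _ h =>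
  RelIso.ext fun v => Sum.inl_injective (congrArg (· (Sum.inl v)) h)

variable [Finite V]

def restrictIso (hG : G ≠ ⊤) (φ : ext G ≃g ext G) : G ≃g G where
  toFun v := (φ (Sum.inl v)).getLeft (isLeft_map_inl hG φ v)
  invFun v := (φ.symm (Sum.inl v)).getLeft (isLeft_map_inl hG φ.symm v)
  left_inv v := by simp
  right_inv v := by simp
  map_rel_iff' {a b} := by
    simp only [Equiv.coe_fn_mk]
    rw [← ext_adj_inl_inl, Sum.inl_getLeft, Sum.inl_getLeft]
    exact φ.map_rel_iff

lemma inl_restrictIso (hG : G ≠ ⊤) (φ : ext G ≃g ext G) (v : V) :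
    Sum.inl (restrictIso hG φ v) = φ (Sum.inl v) :=
  Sum.inl_getLeft _ _

lemma extIso_restrictIso (hG : G ≠ ⊤) (φ : ext G ≃g ext G) : extIso (restrictIso hG φ) = φ := by
  ext (v | v)
  · exact inl_restrictIso hG φ v
  · obtain ⟨w, hw⟩ := Sum.isRight_iff.1 (isRight_map_inr hG φ v)
    -- the matching edge at `v` is mapped to the matching edge at `restrictIso hG φ v`
    have hadj := φ.map_rel_iff.2 ((ext_adj_inl_inr (G := G)).2 (rfl : v = v))
    rw [← inl_restrictIso hG φ, hw, ext_adj_inl_inr] at hadj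
    rw [hw, ← hadj]
    rfl

lemma extIsoHom_surjective (hG : G ≠ ⊤) : Function.Surjective (extIsoHom G) := fun φ =>
  ⟨restrictIso hG φ, extIso_restrictIso hG φ⟩

end

theorem stmt3_general {V : Type*} [Fintype V] (G : SimpleGraph V)
    (hnc : G ≠ ⊤) :
    Nonempty ((ext G ≃g ext G) ≃* (G ≃g G)) :=
  ⟨(MulEquiv.ofBijective (extIsoHom G) ⟨extIsoHom_injective, extIsoHom_surjective hnc⟩).symm⟩

theorem stmt3 {V : Type*} [Fintype V] (G : SimpleGraph V)
    (hn : 1 ≤ Fintype.card V) (hnc : G ≠ ⊤) :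
    Nonempty ((ext G ≃g ext G) ≃* (G ≃g G)) :=
  stmt3_general G hnc
end

section
/- For every finite simple graph G and every natural number g, there exists a connected finite simple graph H with Aut(H) ≅ Aut(G) and chromatic number χ(H) ≥ g. -/
open SimpleGraph

/-!
Join `G` to a clique `c₀, …, c_k` and hang from the clique an independent staircase
`s₀, …, s_k` with `N(sⱼ) = {cₜ | j ≤ t}`; finally join `s_k` to all of `G` as well.
For `k > |V|` degrees pin the gadget down: `c₁, …, c_k` are the only vertices of their
degrees, the steps are exactly the vertices of degree at most `k + 1`, `s₀` is the only one of
degree `k + 1`, and the other steps are separated by their neighbours among `c₁, …, c_k`;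
then `c₀` is the only neighbour of `s₀` of its degree. Since the gadget sees every vertex of
`G` in the same way, automorphisms of `G` extend by the identity, and as every automorphism
fixes the gadget pointwise, this extension is an isomorphism of automorphism groups. The clique
bounds the chromatic number, and `c_k` is adjacent to every other vertex.
-/

namespace SimpleGraph

section partialJoin

variable {V X : Type*}

def partialJoin (G : SimpleGraph V) (R : SimpleGraph X) (s : Finset X) :
    SimpleGraph (V ⊕ X) where
  Adj
    | .inl a, .inl b => G.Adj a b
    | .inl _, .inr x | .inr x, .inl _ => x ∈ s
    | .inr x, .inr y => R.Adj x y
  symm := ⟨by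
    rintro (a | x) (b | y) h
    exacts [h.symm, h, h, h.symm]⟩
  loopless := ⟨by
    rintro (a | x) h
    exacts [G.loopless.irrefl a h, R.loopless.irrefl x h]⟩

variable {G : SimpleGraph V} {R : SimpleGraph X} {s : Finset X} {a b : V} {x y : X}

@[simp] lemma partialJoin_adj_inl_inl : (partialJoin G R s).Adj (.inl a) (.inl b) ↔ G.Adj a b :=
  Iff.rfl

@[simp] lemma partialJoin_adj_inl_inr : (partialJoin G R s).Adj (.inl a) (.inr x) ↔ x ∈ s :=
  Iff.rfl

@[simp] lemma partialJoin_adj_inr_inl : (partialJoin G R s).Adj (.inr x) (.inl a) ↔ x ∈ s :=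
  Iff.rfl

@[simp] lemma partialJoin_adj_inr_inr : (partialJoin G R s).Adj (.inr x) (.inr y) ↔ R.Adj x y :=
  Iff.rfl

def Iso.partialJoinCongrLeft (σ : G ≃g G) : partialJoin G R s ≃g partialJoin G R s where
  toEquiv := σ.toEquiv.sumCongr (Equiv.refl X)
  map_rel_iff' := by rintro (a | x) (b | y) <;> simp [σ.map_adj_iff]

def partialJoinAutHom : (G ≃g G) →* (partialJoin G R s ≃g partialJoin G R s) where
  toFun := Iso.partialJoinCongrLeft
  map_one' := by ext (a | x) <;> rfl
  map_mul' _ _ := by ext (a | x) <;> rfl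

theorem nonempty_mulEquiv_aut_partialJoin [Finite V] [Finite X]
    (hfix : ∀ (f : partialJoin G R s ≃g partialJoin G R s) x, f (.inr x) = .inr x) :
    Nonempty ((partialJoin G R s ≃g partialJoin G R s) ≃* (G ≃g G)) := by
  refine ⟨(MulEquiv.ofBijective (partialJoinAutHom (R := R) (s := s)) ⟨?_, ?_⟩).symm⟩
  · intro σ τ h
    ext a
    exact Sum.inl_injective (DFunLike.congr_fun h (.inl a))
  · intro f
    have hmaps : Set.MapsTo f.toEquiv (Set.range Sum.inl) (Set.range Sum.inl) := by
      rintro _ ⟨a, rfl⟩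
      rcases hfa : f (.inl a) with b | x
      · exact ⟨b, rfl⟩
      · exact absurd (f.injective (hfa.trans (hfix f x).symm)) Sum.inl_ne_inr
    obtain ⟨⟨p, q⟩, hpq⟩ := Equiv.Perm.mem_sumCongrHom_range_of_perm_mapsTo_inl hmaps
    have hf (a : V) : f (.inl a) = .inl (p a) := (DFunLike.congr_fun hpq (.inl a)).symm
    refine ⟨⟨p, fun {a b} => ?_⟩, ?_⟩
    · simpa [hf] using f.map_adj_iff (v := .inl a) (w := .inl b)
    · ext (a | x)
      · exact (hf a).symm
      · exact (hfix f x).symm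

open Finset
open scoped Classical

variable [Fintype V] [Fintype X]

theorem degree_partialJoin_inl (a : V) :
    (partialJoin G R s).degree (.inl a) = G.degree a + #s := by
  rw [← card_neighborFinset_eq_degree, ← card_neighborFinset_eq_degree, ← card_disjSum]
  congr 1
  ext (b | x) <;> simp

theorem degree_partialJoin_inr (x : X) :
    (partialJoin G R s).degree (.inr x) = R.degree x + if x ∈ s then Fintype.card V else 0 := by
  have : (partialJoin G R s).neighborFinset (.inr x) =
      (if x ∈ s then univ else ∅).disjSum (R.neighborFinset x) := by
    ext (b | y) <;> split_ifs <;> simp [*]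
  rw [← card_neighborFinset_eq_degree, ← card_neighborFinset_eq_degree, this, card_disjSum,
    add_comm]
  split_ifs <;> simp

end partialJoin

section staircase

def staircase (k : ℕ) : SimpleGraph (Fin (k + 1) ⊕ Fin (k + 1)) where
  Adj
    | .inl s, .inl t => s ≠ t
    | .inl t, .inr j | .inr j, .inl t => j ≤ t
    | .inr _, .inr _ => False
  symm := ⟨by
    rintro (s | j) (t | i) h
    exacts [Ne.symm h, h, h, h]⟩
  loopless := ⟨by
    rintro (t | j) h
    exacts [h rfl, h]⟩

open Finset
open scoped Classical

variable {k : ℕ} {s t i j : Fin (k + 1)}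

@[simp] lemma staircase_adj_inl_inl : (staircase k).Adj (.inl s) (.inl t) ↔ s ≠ t := Iff.rfl

@[simp] lemma staircase_adj_inl_inr : (staircase k).Adj (.inl t) (.inr j) ↔ j ≤ t := Iff.rfl

@[simp] lemma staircase_adj_inr_inl : (staircase k).Adj (.inr j) (.inl t) ↔ j ≤ t := Iff.rfl

@[simp] lemma staircase_not_adj_inr_inr : ¬ (staircase k).Adj (.inr i) (.inr j) := id

theorem degree_staircase_inl (t : Fin (k + 1)) :
    (staircase k).degree (.inl t) = k + (t + 1) := by
  have : (staircase k).neighborFinset (.inl t) = (univ.erase t).disjSum (Iic t) := by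
    ext (s | j) <;> simp [eq_comm]
  rw [← card_neighborFinset_eq_degree, this, card_disjSum, card_erase_of_mem (mem_univ t),
    card_univ, Fintype.card_fin, Fin.card_Iic, Nat.add_sub_cancel]

theorem degree_staircase_inr (j : Fin (k + 1)) : (staircase k).degree (.inr j) = k + 1 - j := by
  have : (staircase k).neighborFinset (.inr j) = (Ici j).disjSum ∅ := by
    ext (t | i) <;> simp
  rw [← card_neighborFinset_eq_degree, this, card_disjSum, Fin.card_Ici, card_empty, add_zero]

end staircase

section staircaseJoin

open Finset

variable {V : Type*}

/-- Joining the last step to `G` is what separates `s₀` from the isolated vertices of `G`: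
otherwise both would have neighbourhood exactly the clique. -/
abbrev staircaseJoin (G : SimpleGraph V) (k : ℕ) :
    SimpleGraph (V ⊕ (Fin (k + 1) ⊕ Fin (k + 1))) :=
  partialJoin G (staircase k) (univ.disjSum {Fin.last k})

variable {G : SimpleGraph V} {k : ℕ}

theorem staircaseJoin_connected : (staircaseJoin G k).Connected := by
  refine (connected_iff_exists_forall_reachable _).2 ⟨.inr (.inl (Fin.last k)), ?_⟩
  rintro (a | t | j)
  · exact Adj.reachable (by simp)
  · rcases eq_or_ne t (Fin.last k) with rfl | ht
    · rfl
    · exact Adj.reachable (by simpa using ht.symm)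
  · exact Adj.reachable (by simp [Fin.le_last])

theorem succ_le_chromaticNumber_staircaseJoin :
    (k + 1 : ℕ∞) ≤ (staircaseJoin G k).chromaticNumber :=
  le_chromaticNumber_of_pairwise_adj (by simp) (fun t => .inr (.inl t)) fun _ _ hst => by simpa

open scoped Classical

variable [Fintype V]

theorem degree_staircaseJoin_inl (a : V) :
    (staircaseJoin G k).degree (.inl a) = G.degree a + (k + 2) := by
  simp [degree_partialJoin_inl]

theorem degree_staircaseJoin_clique (t : Fin (k + 1)) :
    (staircaseJoin G k).degree (.inr (.inl t)) = k + (t + 1) + Fintype.card V := by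
  simp [degree_partialJoin_inr, degree_staircase_inl]

theorem degree_staircaseJoin_step (j : Fin (k + 1)) :
    (staircaseJoin G k).degree (.inr (.inr j)) =
      k + 1 - j + if j = Fin.last k then Fintype.card V else 0 := by
  simp [degree_partialJoin_inr, degree_staircase_inr]

theorem degree_staircaseJoin_step_le (hk : Fintype.card V ≤ k) (j : Fin (k + 1)) :
    (staircaseJoin G k).degree (.inr (.inr j)) ≤ k + 1 := by
  rw [degree_staircaseJoin_step]
  split_ifs with h
  · rw [h, Fin.val_last]
    omega
  · omega

theorem degree_staircaseJoin_step_eq_iff (hk : Fintype.card V < k) (j : Fin (k + 1)) :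
    (staircaseJoin G k).degree (.inr (.inr j)) = k + 1 ↔ j = 0 := by
  rw [degree_staircaseJoin_step]
  split_ifs with h
  · subst h
    rw [Fin.ext_iff, Fin.val_last, Fin.val_zero]
    omega
  · rw [add_zero, Fin.ext_iff, Fin.val_zero]
    omega

theorem staircaseJoin_eq_clique_of_degree_eq (hk : Fintype.card V < k) {t : Fin (k + 1)}
    (ht : 0 < t) {y : V ⊕ (Fin (k + 1) ⊕ Fin (k + 1))}
    (h : (staircaseJoin G k).degree y = (staircaseJoin G k).degree (.inr (.inl t))) :
    y = .inr (.inl t) := by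
  rw [degree_staircaseJoin_clique] at h
  rw [Fin.lt_def, Fin.val_zero] at ht
  rcases y with a | s | j
  · have := G.degree_lt_card_verts a
    rw [degree_staircaseJoin_inl] at h
    omega
  · rw [degree_staircaseJoin_clique] at h
    rw [Fin.ext_iff.mpr (by omega : (s : ℕ) = t)]
  · have := degree_staircaseJoin_step_le (G := G) hk.le j
    omega

theorem staircaseJoin_exists_step_of_degree_le [Nonempty V]
    {y : V ⊕ (Fin (k + 1) ⊕ Fin (k + 1))} (h : (staircaseJoin G k).degree y ≤ k + 1) :
    ∃ j, y = .inr (.inr j) := by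
  have := Fintype.card_pos (α := V)
  rcases y with a | t | j
  · rw [degree_staircaseJoin_inl] at h
    omega
  · rw [degree_staircaseJoin_clique] at h
    omega
  · exact ⟨j, rfl⟩

variable (f : staircaseJoin G k ≃g staircaseJoin G k)

theorem Iso.staircaseJoin_apply_clique_of_pos (hk : Fintype.card V < k) {t : Fin (k + 1)}
    (ht : 0 < t) : f (.inr (.inl t)) = .inr (.inl t) :=
  staircaseJoin_eq_clique_of_degree_eq hk ht (f.degree_eq _)

theorem Iso.staircaseJoin_apply_step [Nonempty V] (hk : Fintype.card V < k) (j : Fin (k + 1)) :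
    f (.inr (.inr j)) = .inr (.inr j) := by
  have hdeg := f.degree_eq (.inr (.inr j))
  obtain ⟨i, hi⟩ :=
    staircaseJoin_exists_step_of_degree_le (hdeg ▸ degree_staircaseJoin_step_le hk.le j)
  rw [hi] at hdeg ⊢
  have hzero : i = 0 ↔ j = 0 := by
    rw [← degree_staircaseJoin_step_eq_iff hk, hdeg, degree_staircaseJoin_step_eq_iff hk]
  rcases eq_or_ne j 0 with rfl | hj
  · rw [hzero.mpr rfl]
  · have hi0 : 0 < i := Fin.pos_iff_ne_zero.mpr (hzero.not.mpr hj)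
    have hj0 : 0 < j := Fin.pos_iff_ne_zero.mpr hj
    have hij : i ≤ j := by
      simpa [hi, f.staircaseJoin_apply_clique_of_pos hk hj0] using
        f.map_adj_iff (v := .inr (.inr j)) (w := .inr (.inl j))
    have hji : j ≤ i := by
      simpa [hi, f.staircaseJoin_apply_clique_of_pos hk hi0] using
        f.map_adj_iff (v := .inr (.inr j)) (w := .inr (.inl i))
    rw [le_antisymm hij hji]

theorem Iso.staircaseJoin_apply_clique [Nonempty V] (hk : Fintype.card V < k)
    (t : Fin (k + 1)) : f (.inr (.inl t)) = .inr (.inl t) := by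
  rcases eq_or_ne t 0 with rfl | ht
  · have hk0 : k ≠ 0 := by omega
    have hadj := f.map_adj_iff.mpr
      (show (staircaseJoin G k).Adj (.inr (.inr 0)) (.inr (.inl 0)) by simp)
    rw [f.staircaseJoin_apply_step hk] at hadj
    rcases hy : f (.inr (.inl 0)) with a | s | j
    · simp [hy, Fin.ext_iff, hk0.symm] at hadj
    · have hdeg := f.degree_eq (.inr (.inl 0))
      rw [hy, degree_staircaseJoin_clique, degree_staircaseJoin_clique] at hdeg
      rw [Fin.ext_iff.mpr (by simp at hdeg ⊢; omega : (s : ℕ) = (0 : Fin (k + 1)))]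
    · simp [hy] at hadj
  · exact f.staircaseJoin_apply_clique_of_pos hk (Fin.pos_iff_ne_zero.mpr ht)

theorem Iso.staircaseJoin_apply_inr [Nonempty V] (hk : Fintype.card V < k) :
    ∀ x, f (.inr x) = .inr x
  | .inl t => f.staircaseJoin_apply_clique hk t
  | .inr j => f.staircaseJoin_apply_step hk j

theorem nonempty_mulEquiv_aut_staircaseJoin [Nonempty V] (hk : Fintype.card V < k) :
    Nonempty ((staircaseJoin G k ≃g staircaseJoin G k) ≃* (G ≃g G)) :=
  nonempty_mulEquiv_aut_partialJoin fun f => f.staircaseJoin_apply_inr hk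

end staircaseJoin

instance {V : Type*} [Subsingleton V] (G : SimpleGraph V) : Unique (G ≃g G) where
  default := Iso.refl
  uniq _ := RelIso.ext fun _ => Subsingleton.elim _ _

theorem exists_connected_mulEquiv_aut_le_chromaticNumber {V : Type} [Fintype V] [Nonempty V]
    (G : SimpleGraph V) (g : ℕ) :
    ∃ (W : Type) (_ : Fintype W) (H : SimpleGraph W),
      H.Connected ∧ Nonempty ((H ≃g H) ≃* (G ≃g G)) ∧ (g : ℕ∞) ≤ H.chromaticNumber := by
  set k := Fintype.card V + g + 1
  refine ⟨_, inferInstance, staircaseJoin G k, staircaseJoin_connected,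
    nonempty_mulEquiv_aut_staircaseJoin (by omega), ?_⟩
  exact le_trans (by exact_mod_cast (by omega : g ≤ k + 1)) succ_le_chromaticNumber_staircaseJoin

end SimpleGraph

theorem stmt12 {V : Type} [Fintype V] (G : SimpleGraph V) (g : ℕ) :
    ∃ (W : Type) (_ : Fintype W) (H : SimpleGraph W),
      H.Connected ∧ Nonempty ((H ≃g H) ≃* (G ≃g G)) ∧
      (g : ℕ∞) ≤ H.chromaticNumber := by
  rcases isEmpty_or_nonempty V with hV | hV
  · -- without any vertex of `G` the gadget has the twins `c₀`, `s₀`, so use the one-vertex graph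
    obtain ⟨W, hW, H, hconn, ⟨e⟩, hχ⟩ :=
      exists_connected_mulEquiv_aut_le_chromaticNumber (⊥ : SimpleGraph Unit) g
    exact ⟨W, hW, H, hconn, ⟨e.trans MulEquiv.ofUnique⟩, hχ⟩
  · exact exists_connected_mulEquiv_aut_le_chromaticNumber G g
end
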